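/- arXiv:2402.05205 — 2 statements merged into one kernel-verified Lean document; each statement's English description precedes it below -/
import Mathlib

section
/- The denominator (1+x_1)(1+y_1) + 2 - 2x_1y_1 + 2∑_{i=2}^{n+1} x_i y_i is strictly positive for all points (x, y) ∈ S^n × S^n with (x, y) ≠ (-e, -e). -/
/-!
On the sphere, the denominator is the sum of squares
`(x₁ + (1 - y₁)/2)² + ¾ (1 + y₁)² + ∑_{i ≥ 2} (xᵢ + yᵢ)²`, which vanishes only
when `x₁ = y₁ = -1`, and the only point of `Sⁿ` with first coordinate `-1` is `-e`.
-/

/-- The point `-e = (-1,0,…,0) ∈ ℝ^{n+1}`. -/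
noncomputable def negE (n : ℕ) : Fin (n + 1) → ℝ := Fin.cons (-1) 0

lemma eq_negE_of_sum_sq_eq_one_of_head_eq {n : ℕ} {x : Fin (n + 1) → ℝ}
    (hx : ∑ i, x i ^ 2 = 1) (h0 : x 0 = -1) : x = negE n := by
  rw [Fin.sum_univ_succ, h0] at hx
  have htail : ∑ i : Fin n, x i.succ ^ 2 = 0 := by linarith
  funext j
  induction j using Fin.cases with
  | zero => simp [negE, h0]
  | succ i =>
    have hi := (Finset.sum_eq_zero_iff_of_nonneg fun i _ => sq_nonneg (x i.succ)).1 htail i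
      (Finset.mem_univ i)
    simpa [negE] using hi

lemma denominator_eq_sum_sq {n : ℕ} {x y : Fin (n + 1) → ℝ}
    (hx : ∑ i, x i ^ 2 = 1) (hy : ∑ i, y i ^ 2 = 1) :
    (1 + x 0) * (1 + y 0) + 2 - 2 * x 0 * y 0 + 2 * ∑ i : Fin n, x i.succ * y i.succ =
      (x 0 + (1 - y 0) / 2) ^ 2 + 3 / 4 * (1 + y 0) ^ 2 +
        ∑ i : Fin n, (x i.succ + y i.succ) ^ 2 := by
  rw [Fin.sum_univ_succ] at hx hy
  simp only [add_sq, Finset.sum_add_distrib, mul_assoc, ← Finset.mul_sum]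
  linear_combination -hx - hy

/-- the denominator `(1+x₁)(1+y₁) + 2 - 2x₁y₁ + 2∑_{i≥2} xᵢyᵢ` is
strictly positive for all `(x,y) ∈ Sⁿ × Sⁿ` with `(x,y) ≠ (-e,-e)`. -/
theorem stmt5 (n : ℕ) (x y : Fin (n + 1) → ℝ)
    (hx : ∑ i, x i ^ 2 = 1) (hy : ∑ i, y i ^ 2 = 1)
    (h : ¬(x = negE n ∧ y = negE n)) :
    0 < (1 + x 0) * (1 + y 0) + 2 - 2 * x 0 * y 0 +
        2 * ∑ i : Fin n, x i.succ * y i.succ := by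
  rw [denominator_eq_sum_sq hx hy]
  by_contra! hle
  have htail : 0 ≤ ∑ i : Fin n, (x i.succ + y i.succ) ^ 2 :=
    Finset.sum_nonneg fun i _ => sq_nonneg _
  have hy0 : y 0 = -1 := by nlinarith [sq_nonneg (x 0 + (1 - y 0) / 2), sq_nonneg (1 + y 0)]
  have hx0 : x 0 = -1 := by nlinarith [sq_nonneg (x 0 + (1 - y 0) / 2), sq_nonneg (1 + y 0)]
  exact h ⟨eq_negE_of_sum_sq_eq_one_of_head_eq hx hx0,
    eq_negE_of_sum_sq_eq_one_of_head_eq hy hy0⟩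
end

section
/- For a = (x_1,...,x_k) ∈ ℂ^k with ∑|x_i|² = 1 and x_1 ≠ -1, the complex k × k matrix M'(a) with entries α_{i,1} = x_i, α_{1,j} = -((1+x_1)/(1+\bar{x}_1))·\bar{x}_j for j ≠ 1, α_{i,i} = 1 - |x_i|²/(1+\bar{x}_1) for i > 1, and α_{i,j} = -x_i\bar{x}_j/(1+\bar{x}_1) for i ≠ j, i,j > 1, is a unitary matrix. -/
/-- The complex matrix `M'(a)`: `α_{i,1} = x_i`,
`α_{1,j} = -((1+x_1)/(1+conj x_1))·conj x_j` for `j ≠ 1`,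
`α_{i,i} = 1 - |x_i|²/(1+conj x_1)` for `i > 1`, and
`α_{i,j} = -x_i·conj x_j/(1+conj x_1)` for `i ≠ j`, `i,j > 1` (0-based indices);
here `|x_i|² = x_i · conj x_i`. -/
noncomputable def sectionMatrixC (k : ℕ) (a : Fin (k + 1) → ℂ) :
    Matrix (Fin (k + 1)) (Fin (k + 1)) ℂ :=
  Matrix.of fun i j =>
    if j = 0 then a i
    else if i = 0 then -((1 + a 0) / (1 + star (a 0))) * star (a j)
    else if i = j then 1 - a i * star (a i) / (1 + star (a 0))
    else -(a i * star (a j)) / (1 + star (a 0))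

/-- for `a ∈ ℂᵏ` with `∑|x_i|² = 1` and `x_1 ≠ -1`, the matrix `M'(a)`
is unitary. -/
theorem stmt9 (k : ℕ) (a : Fin (k + 1) → ℂ)
    (ha : ∑ i, Complex.normSq (a i) = 1) (ha1 : a 0 ≠ -1) :
    sectionMatrixC k a ∈ Matrix.unitaryGroup (Fin (k + 1)) ℂ := by
  have ht : (1 : ℂ) + a 0 ≠ 0 := by
    intro h; apply ha1; linear_combination h
  have hs : (1 : ℂ) + star (a 0) ≠ 0 := by
    intro h
    apply ht
    have := congrArg star h
    simpa using this
  have hs2 : (1 : ℂ) + (starRingEnd ℂ) (a 0) ≠ 0 := hs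
  have ht2 : (1 : ℂ) + (starRingEnd ℂ) ((starRingEnd ℂ) (a 0)) ≠ 0 := by simpa using ht
  set g : Fin (k + 1) → ℂ := fun i => a i * star (a i) with hg
  have hsum : ∑ i, g i = 1 := by
    have h1 : ∀ i, g i = (Complex.normSq (a i) : ℂ) := fun i => (Complex.mul_conj (a i))
    rw [Finset.sum_congr rfl fun i _ => h1 i, ← Complex.ofReal_sum, ha, Complex.ofReal_one]
  rw [Matrix.mem_unitaryGroup_iff']
  ext p q
  rw [Matrix.mul_apply, Matrix.one_apply]
  simp only [Matrix.star_apply]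
  by_cases hp : p = 0
  · subst hp
    by_cases hq : q = 0
    · subst hq
      rw [if_pos rfl]
      have : ∀ i : Fin (k+1), star (sectionMatrixC k a i 0) * sectionMatrixC k a i 0 = g i := by
        intro i
        simp only [sectionMatrixC, Matrix.of_apply, eq_self_iff_true, if_true, hg]
        ring
      rw [Finset.sum_congr rfl fun i _ => this i, hsum]
    · rw [if_neg (fun h => hq h.symm)]
      rw [← Finset.sum_erase_add Finset.univ _ (Finset.mem_univ (0 : Fin (k+1))),
          ← Finset.sum_erase_add _ _ (Finset.mem_erase.mpr ⟨hq, Finset.mem_univ q⟩)]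
      have hE2 : ∑ i ∈ (Finset.univ.erase (0 : Fin (k+1))).erase q, g i = 1 - g 0 - g q := by
        have h1 := Finset.sum_erase_add Finset.univ g (Finset.mem_univ (0 : Fin (k+1)))
        have h2 := Finset.sum_erase_add (Finset.univ.erase 0) g
          (Finset.mem_erase.mpr ⟨hq, Finset.mem_univ q⟩)
        rw [hsum] at h1
        linear_combination h1 + h2
      have hcongr : ∀ i ∈ (Finset.univ.erase (0 : Fin (k+1))).erase q,
          star (sectionMatrixC k a i 0) * sectionMatrixC k a i q
            = (-(star (a q)) / (1 + star (a 0))) * g i := by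
        intro i hi
        rw [Finset.mem_erase, Finset.mem_erase] at hi
        obtain ⟨hiq, hi0, -⟩ := hi
        simp only [sectionMatrixC, Matrix.of_apply, eq_self_iff_true, if_true, if_neg hq, if_neg hi0,
          if_neg hiq, hg]
        ring
      rw [Finset.sum_congr rfl hcongr, ← Finset.mul_sum, hE2]
      simp only [sectionMatrixC, Matrix.of_apply, eq_self_iff_true, if_true, if_neg hq, hg, star_sub, star_div₀,
        star_mul', star_neg, star_one, star_add, star_star]
      field_simp [hs, ht, hs2, ht2]
      ring
  · by_cases hq : q = 0
    · subst hq
      rw [if_neg hp]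
      rw [← Finset.sum_erase_add Finset.univ _ (Finset.mem_univ (0 : Fin (k+1))),
          ← Finset.sum_erase_add _ _ (Finset.mem_erase.mpr ⟨hp, Finset.mem_univ p⟩)]
      have hE2 : ∑ i ∈ (Finset.univ.erase (0 : Fin (k+1))).erase p, g i = 1 - g 0 - g p := by
        have h1 := Finset.sum_erase_add Finset.univ g (Finset.mem_univ (0 : Fin (k+1)))
        have h2 := Finset.sum_erase_add (Finset.univ.erase 0) g
          (Finset.mem_erase.mpr ⟨hp, Finset.mem_univ p⟩)
        rw [hsum] at h1
        linear_combination h1 + h2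
      have hcongr : ∀ i ∈ (Finset.univ.erase (0 : Fin (k+1))).erase p,
          star (sectionMatrixC k a i p) * sectionMatrixC k a i 0
            = (-(a p) / (1 + a 0)) * g i := by
        intro i hi
        rw [Finset.mem_erase, Finset.mem_erase] at hi
        obtain ⟨hip, hi0, -⟩ := hi
        simp only [sectionMatrixC, Matrix.of_apply, eq_self_iff_true, if_true, if_neg hp, if_neg hi0,
          if_neg hip, hg, star_div₀, star_mul', star_neg, star_add, star_one, star_star]
        ring
      rw [Finset.sum_congr rfl hcongr, ← Finset.mul_sum, hE2]
      simp only [sectionMatrixC, Matrix.of_apply, eq_self_iff_true, if_true, if_neg hp, hg, star_sub, star_div₀,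
        star_mul', star_neg, star_one, star_add, star_star]
      field_simp [hs, ht, hs2, ht2]
      ring
    · by_cases hpq : p = q
      · subst hpq
        rw [if_pos rfl]
        rw [← Finset.sum_erase_add Finset.univ _ (Finset.mem_univ (0 : Fin (k+1))),
            ← Finset.sum_erase_add _ _ (Finset.mem_erase.mpr ⟨hp, Finset.mem_univ p⟩)]
        have hE2 : ∑ i ∈ (Finset.univ.erase (0 : Fin (k+1))).erase p, g i = 1 - g 0 - g p := by
          have h1 := Finset.sum_erase_add Finset.univ g (Finset.mem_univ (0 : Fin (k+1)))
          have h2 := Finset.sum_erase_add (Finset.univ.erase 0) g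
            (Finset.mem_erase.mpr ⟨hp, Finset.mem_univ p⟩)
          rw [hsum] at h1
          linear_combination h1 + h2
        have hcongr : ∀ i ∈ (Finset.univ.erase (0 : Fin (k+1))).erase p,
            star (sectionMatrixC k a i p) * sectionMatrixC k a i p
              = (a p * star (a p) / ((1 + a 0) * (1 + star (a 0)))) * g i := by
          intro i hi
          rw [Finset.mem_erase, Finset.mem_erase] at hi
          obtain ⟨hip, hi0, -⟩ := hi
          simp only [sectionMatrixC, Matrix.of_apply, if_neg hp, if_neg hi0, if_neg hip, hg,
            star_div₀, star_mul', star_neg, star_add, star_one, star_star]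
          field_simp [hs, ht, hs2, ht2]
        rw [Finset.sum_congr rfl hcongr, ← Finset.mul_sum, hE2]
        simp only [sectionMatrixC, Matrix.of_apply, eq_self_iff_true, if_true, if_neg hp, hg, star_sub,
          star_div₀, star_mul', star_neg, star_one, star_add, star_star]
        field_simp [hs, ht, hs2, ht2]
        ring
      · rw [if_neg hpq]
        rw [← Finset.sum_erase_add Finset.univ _ (Finset.mem_univ (0 : Fin (k+1))),
            ← Finset.sum_erase_add _ _ (Finset.mem_erase.mpr ⟨hp, Finset.mem_univ p⟩),
            ← Finset.sum_erase_add _ _ (Finset.mem_erase.mpr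
              ⟨fun h => hpq h.symm, Finset.mem_erase.mpr ⟨hq, Finset.mem_univ q⟩⟩)]
        have hE3 : ∑ i ∈ (((Finset.univ.erase (0 : Fin (k+1))).erase p).erase q), g i
            = 1 - g 0 - g p - g q := by
          have h1 := Finset.sum_erase_add Finset.univ g (Finset.mem_univ (0 : Fin (k+1)))
          have h2 := Finset.sum_erase_add (Finset.univ.erase 0) g
            (Finset.mem_erase.mpr ⟨hp, Finset.mem_univ p⟩)
          have h3 := Finset.sum_erase_add ((Finset.univ.erase 0).erase p) g
            (Finset.mem_erase.mpr ⟨fun h => hpq h.symm, Finset.mem_erase.mpr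
              ⟨hq, Finset.mem_univ q⟩⟩)
          rw [hsum] at h1
          linear_combination h1 + h2 + h3
        have hcongr : ∀ i ∈ (((Finset.univ.erase (0 : Fin (k+1))).erase p).erase q),
            star (sectionMatrixC k a i p) * sectionMatrixC k a i q
              = (a p * star (a q) / ((1 + a 0) * (1 + star (a 0)))) * g i := by
          intro i hi
          rw [Finset.mem_erase, Finset.mem_erase, Finset.mem_erase] at hi
          obtain ⟨hiq, hip, hi0, -⟩ := hi
          simp only [sectionMatrixC, Matrix.of_apply, if_neg hp, if_neg hq, if_neg hi0,
            if_neg hip, if_neg hiq, hg, star_div₀, star_mul', star_neg, star_add, star_one,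
            star_star]
          field_simp [hs, ht, hs2, ht2]
        rw [Finset.sum_congr rfl hcongr, ← Finset.mul_sum, hE3]
        simp only [sectionMatrixC, Matrix.of_apply, eq_self_iff_true, if_true, if_neg hp, if_neg hq,
          if_neg hpq, if_neg (fun h : q = p => hpq h.symm), hg, star_sub, star_div₀, star_mul',
          star_neg, star_one, star_add, star_star]
        field_simp [hs, ht, hs2, ht2]
        ring
end
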